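/- arXiv:2508.07175 — 9 statements merged into one kernel-verified Lean document; each statement's English description precedes it below -/
import Mathlib

section
/- Let E be a nontrivial real inner product space and let α > 0 and β > 0. Define f : E → E by f(x) = (1 + (β·‖x‖)^α)^(−1/α) • x. Then 1/β is the least upper bound of the set {‖f(x)‖ : x ∈ E}. -/
open Real Filter Topology Set

private lemma sl_scalar_pos (α β : ℝ) (t : ℝ) (ht : 0 ≤ t) (hβ : 0 < β) :
    0 < (1 + (β * t) ^ α) ^ (-1 / α) := by
  apply Real.rpow_pos_of_pos
  have : (0:ℝ) ≤ (β * t) ^ α := Real.rpow_nonneg (by positivity) _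
  linarith

private lemma sl_key (α β : ℝ) (hα : 0 < α) (hβ : 0 < β) (t : ℝ) (ht : 0 ≤ t) :
    (1 + (β * t) ^ α) ^ (-1 / α) * t ≤ 1 / β := by
  rcases ht.eq_or_lt with h | h
  · rw [← h, mul_zero]; positivity
  · have hbt : 0 < β * t := by positivity
    have hs : (0:ℝ) < (β * t) ^ α := Real.rpow_pos_of_pos hbt _
    have h1 : (β * t) ^ α ≤ 1 + (β * t) ^ α := by linarith
    have h2 : β * t ≤ (1 + (β * t) ^ α) ^ (1 / α) := by
      have := Real.rpow_le_rpow hs.le h1 (by positivity : (0:ℝ) ≤ 1/α)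
      rwa [← Real.rpow_mul hbt.le, mul_one_div, div_self hα.ne', Real.rpow_one] at this
    have hc : (1 + (β * t) ^ α) ^ (-1 / α) ≤ (β * t)⁻¹ := by
      rw [neg_div, Real.rpow_neg (by linarith)]
      exact inv_anti₀ hbt h2
    calc (1 + (β * t) ^ α) ^ (-1 / α) * t ≤ (β * t)⁻¹ * t :=
          mul_le_mul_of_nonneg_right hc ht
      _ = 1 / β := by field_simp

private lemma sl_eq (α β : ℝ) (hα : 0 < α) (hβ : 0 < β) (m : ℝ) (hm : 0 < m) :
    (1 + (β * m) ^ α) ^ (-1 / α) * m = (m ^ (-α) + β ^ α) ^ (-1 / α) := by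
  have h1 : m ^ (-α) + β ^ α = (1 + (β * m) ^ α) * m ^ (-α) := by
    rw [Real.mul_rpow hβ.le hm.le, add_mul, one_mul, mul_assoc,
      ← Real.rpow_add hm, add_neg_cancel, Real.rpow_zero, mul_one, add_comm]
  have hpos : (0:ℝ) < 1 + (β * m) ^ α := by
    have : (0:ℝ) ≤ (β * m) ^ α := Real.rpow_nonneg (by positivity) _
    linarith
  rw [h1, Real.mul_rpow hpos.le (Real.rpow_nonneg hm.le _),
    ← Real.rpow_mul hm.le]
  have hexp : -α * (-1 / α) = 1 := by field_simp
  rw [hexp, Real.rpow_one]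

/-- On a nontrivial real inner product space, `1/β` is the least upper bound of
the norms of the strain-limiting response `f(x) = (1 + (β‖x‖)^α)^(-1/α) • x`. -/
theorem strainLimiting_response_isLUB
    {E : Type*} [NormedAddCommGroup E] [InnerProductSpace ℝ E] [Nontrivial E]
    (α β : ℝ) (hα : 0 < α) (hβ : 0 < β) :
    IsLUB (Set.range fun x : E => ‖(1 + (β * ‖x‖) ^ α) ^ (-1 / α) • x‖) (1 / β) := by
  constructor
  · rintro _ ⟨x, rfl⟩
    show ‖(1 + (β * ‖x‖) ^ α) ^ (-1 / α) • x‖ ≤ 1 / β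
    have hc := sl_scalar_pos α β ‖x‖ (norm_nonneg x) hβ
    rw [norm_smul, Real.norm_eq_abs, abs_of_pos hc]
    exact sl_key α β hα hβ ‖x‖ (norm_nonneg x)
  · intro b hb
    obtain ⟨v, hv⟩ := exists_ne (0 : E)
    set x : ℕ → E := fun n => (((n:ℝ) + 1) / ‖v‖) • v with hx
    have hnx : ∀ n, ‖x n‖ = (n:ℝ) + 1 := by
      intro n
      have hv' : (0:ℝ) < ‖v‖ := norm_pos_iff.mpr hv
      rw [hx, norm_smul, Real.norm_eq_abs, abs_of_pos (by positivity),
        div_mul_cancel₀ _ hv'.ne']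
    have hval : ∀ n : ℕ,
        ‖(1 + (β * ‖x n‖) ^ α) ^ (-1 / α) • x n‖
          = (((n:ℝ) + 1) ^ (-α) + β ^ α) ^ (-1 / α) := by
      intro n
      have hm : (0:ℝ) < (n:ℝ) + 1 := by positivity
      have hc := sl_scalar_pos α β ‖x n‖ (norm_nonneg _) hβ
      rw [norm_smul, Real.norm_eq_abs, abs_of_pos hc, hnx n,
        sl_eq α β hα hβ _ hm]
    have htend : Tendsto (fun n : ℕ => (((n:ℝ) + 1) ^ (-α) + β ^ α) ^ (-1 / α))
        atTop (𝓝 (1 / β)) := by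
      have h1 : Tendsto (fun n : ℕ => ((n:ℝ) + 1)) atTop atTop :=
        tendsto_atTop_add_const_right _ 1 tendsto_natCast_atTop_atTop
      have h2 : Tendsto (fun n : ℕ => ((n:ℝ) + 1) ^ (-α)) atTop (𝓝 0) :=
        (tendsto_rpow_neg_atTop hα).comp h1
      have h3 : Tendsto (fun n : ℕ => ((n:ℝ) + 1) ^ (-α) + β ^ α) atTop
          (𝓝 (β ^ α)) := by
        simpa using h2.add tendsto_const_nhds
      have h4 : ContinuousAt (fun y : ℝ => y ^ (-1 / α)) (β ^ α) :=
        Real.continuousAt_rpow_const _ _ (Or.inl (Real.rpow_pos_of_pos hβ _).ne')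
      have := h4.tendsto.comp h3
      have heq : ((β:ℝ) ^ α) ^ (-1 / α) = 1 / β := by
        have hexp : α * (-1 / α) = -1 := by field_simp
        rw [← Real.rpow_mul hβ.le, hexp, Real.rpow_neg_one, one_div]
      rwa [heq] at this
    refine le_of_tendsto htend (Eventually.of_forall fun n => ?_)
    have := hb ⟨x n, rfl⟩
    simpa [hval n] using this
end

section
/- Let E be a real inner product space and let α > 0 and β > 0. Define f : E → E by f(x) = (1 + (β·‖x‖)^α)^(−1/α) • x and g : E → E by g(y) = (1 − (β·‖y‖)^α)^(−1/α) • y. Then g(f(x)) = x for every x ∈ E, and f(g(y)) = y for every y ∈ E with ‖y‖ < 1/β; consequently f is a bijection from E onto the open ball of radius 1/β centered at the origin, with inverse g. (This is the invertibility of the strain-limiting constitutive relation yielding the hyperelastic stress–strain form.) -/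
open Real Filter Topology Set

/-- The strain-limiting response map `f(x) = (1 + (β‖x‖)^α)^(-1/α) • x`. -/
noncomputable def strainLimitingMap {E : Type*} [NormedAddCommGroup E]
    [InnerProductSpace ℝ E] (α β : ℝ) (x : E) : E :=
  (1 + (β * ‖x‖) ^ α) ^ (-1 / α) • x

/-- The hyperelastic (inverted) response map `g(y) = (1 - (β‖y‖)^α)^(-1/α) • y`. -/
noncomputable def hyperelasticMap {E : Type*} [NormedAddCommGroup E]
    [InnerProductSpace ℝ E] (α β : ℝ) (y : E) : E :=
  (1 - (β * ‖y‖) ^ α) ^ (-1 / α) • y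

lemma strainLimiting_norm_key {E : Type*} [NormedAddCommGroup E]
    [InnerProductSpace ℝ E] (α β : ℝ) (hα : 0 < α) (hβ : 0 < β) (x : E) :
    (β * ‖strainLimitingMap α β x‖) ^ α
      = (β * ‖x‖) ^ α / (1 + (β * ‖x‖) ^ α) := by
  set t := (β * ‖x‖) ^ α with ht
  have ht0 : 0 ≤ t := Real.rpow_nonneg (by positivity) α
  have h1t : (0:ℝ) < 1 + t := by linarith
  have hc0 : (0:ℝ) < (1 + t) ^ (-1/α) := Real.rpow_pos_of_pos h1t _
  have hnorm : ‖strainLimitingMap α β x‖ = (1 + t) ^ (-1/α) * ‖x‖ := by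
    rw [strainLimitingMap, norm_smul, Real.norm_eq_abs, abs_of_pos hc0]
  have hcα : ((1 + t) ^ (-1/α)) ^ α = (1 + t)⁻¹ := by
    rw [← Real.rpow_mul h1t.le]
    rw [show -1/α * α = -1 by field_simp, Real.rpow_neg_one]
  rw [hnorm, show β * ((1 + t) ^ (-1/α) * ‖x‖) = (1 + t) ^ (-1/α) * (β * ‖x‖) by ring,
    Real.mul_rpow hc0.le (by positivity), hcα, ← ht]
  rw [inv_mul_eq_div]

/-- `g ∘ f = id` on `E`, `f ∘ g = id` on the open ball of radius `1/β`, and `f`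
is a bijection from `E` onto that ball: invertibility of the strain-limiting
constitutive relation, giving the hyperelastic stress–strain form. -/
theorem strainLimiting_inverse_hyperelastic
    {E : Type*} [NormedAddCommGroup E] [InnerProductSpace ℝ E]
    (α β : ℝ) (hα : 0 < α) (hβ : 0 < β) :
    (∀ x : E, hyperelasticMap α β (strainLimitingMap α β x) = x) ∧
    (∀ y : E, ‖y‖ < 1 / β → strainLimitingMap α β (hyperelasticMap α β y) = y) ∧
    Set.BijOn (strainLimitingMap α β) Set.univ (Metric.ball (0 : E) (1 / β)) := by
  have hαne : α ≠ 0 := hα.ne'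
  -- g ∘ f = id
  have hgf : ∀ x : E, hyperelasticMap α β (strainLimitingMap α β x) = x := by
    intro x
    set t := (β * ‖x‖) ^ α with ht
    have ht0 : 0 ≤ t := Real.rpow_nonneg (by positivity) α
    have h1t : (0:ℝ) < 1 + t := by linarith
    have hc0 : (0:ℝ) < (1 + t) ^ (-1/α) := Real.rpow_pos_of_pos h1t _
    rw [hyperelasticMap, strainLimiting_norm_key α β hα hβ x, ← ht,
      show 1 - t / (1 + t) = (1 + t)⁻¹ by field_simp; ring,
      Real.inv_rpow h1t.le,
      show strainLimitingMap α β x = (1 + t) ^ (-1/α) • x from rfl,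
      smul_smul, inv_mul_cancel₀ hc0.ne', one_smul]
  -- f ∘ g = id on the ball
  have hfg : ∀ y : E, ‖y‖ < 1 / β → strainLimitingMap α β (hyperelasticMap α β y) = y := by
    intro y hy
    have hby : β * ‖y‖ < 1 := by
      rw [lt_div_iff₀ hβ] at hy; linarith [hy]
    set s := (β * ‖y‖) ^ α with hs
    have hs0 : 0 ≤ s := Real.rpow_nonneg (by positivity) α
    have hs1 : s < 1 := Real.rpow_lt_one (by positivity) hby hα
    have h1s : (0:ℝ) < 1 - s := by linarith
    have hd0 : (0:ℝ) < (1 - s) ^ (-1/α) := Real.rpow_pos_of_pos h1s _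
    have hnorm : ‖hyperelasticMap α β y‖ = (1 - s) ^ (-1/α) * ‖y‖ := by
      rw [hyperelasticMap, ← hs, norm_smul, Real.norm_eq_abs, abs_of_pos hd0]
    have hdα : ((1 - s) ^ (-1/α)) ^ α = (1 - s)⁻¹ := by
      rw [← Real.rpow_mul h1s.le]
      rw [show -1/α * α = -1 by field_simp, Real.rpow_neg_one]
    have hkey : (β * ‖hyperelasticMap α β y‖) ^ α = s / (1 - s) := by
      rw [hnorm, show β * ((1 - s) ^ (-1/α) * ‖y‖) = (1 - s) ^ (-1/α) * (β * ‖y‖) by ring,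
        Real.mul_rpow hd0.le (by positivity), hdα, ← hs, inv_mul_eq_div]
    rw [strainLimitingMap, hkey,
      show 1 + s / (1 - s) = (1 - s)⁻¹ by field_simp; ring,
      Real.inv_rpow h1s.le,
      show hyperelasticMap α β y = (1 - s) ^ (-1/α) • y from rfl,
      smul_smul, inv_mul_cancel₀ hd0.ne', one_smul]
  refine ⟨hgf, hfg, ?_, ?_, ?_⟩
  · -- MapsTo
    intro x _
    have hkey := strainLimiting_norm_key α β hα hβ x
    set t := (β * ‖x‖) ^ α with ht
    have ht0 : 0 ≤ t := Real.rpow_nonneg (by positivity) α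
    have hlt : (β * ‖strainLimitingMap α β x‖) ^ α < 1 := by
      rw [hkey]
      rw [div_lt_one (by linarith)]; linarith
    have hb : β * ‖strainLimitingMap α β x‖ < 1 := by
      by_contra h
      push_neg at h
      have : (1:ℝ) ≤ (β * ‖strainLimitingMap α β x‖) ^ α := by
        calc (1:ℝ) = 1 ^ α := (Real.one_rpow α).symm
        _ ≤ _ := Real.rpow_le_rpow (by norm_num) h hα.le
      linarith
    simp only [Metric.mem_ball, dist_zero_right]
    rw [lt_div_iff₀ hβ]; linarith
  · -- InjOn
    intro a _ b _ hab
    have := congrArg (hyperelasticMap α β) hab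
    rwa [hgf a, hgf b] at this
  · -- SurjOn
    intro y hy
    simp only [Metric.mem_ball, dist_zero_right] at hy
    exact ⟨hyperelasticMap α β y, trivial, hfg y hy⟩
end

section
/- Let E be a real inner product space and let α > 0 and β > 0. Define f : E → E by f(x) = (1 + (β·‖x‖)^α)^(−1/α) • x. Then f is strictly monotone: for all x, y ∈ E with x ≠ y, the inner product ⟨f(x) − f(y), x − y⟩ is strictly positive. -/
open Real Filter Topology Set
open scoped RealInnerProductSpace

private lemma strainLimiting_aux (α β : ℝ) (hα : 0 < α) (hβ : 0 < β)
    {s t : ℝ} (hs : 0 ≤ s) (hst : s < t) :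
    (1 + (β * s) ^ α) ^ (-1 / α) * s < (1 + (β * t) ^ α) ^ (-1 / α) * t := by
  have ht : 0 < t := lt_of_le_of_lt hs hst
  have hAs : (0:ℝ) < 1 + (β * s) ^ α := by positivity
  have hAt : (0:ℝ) < 1 + (β * t) ^ α := by positivity
  have has : (0:ℝ) ≤ (1 + (β * s) ^ α) ^ (-1 / α) * s := by positivity
  have hat : (0:ℝ) ≤ (1 + (β * t) ^ α) ^ (-1 / α) * t := by positivity
  rw [← Real.rpow_lt_rpow_iff has hat hα,
    Real.mul_rpow (by positivity) hs, Real.mul_rpow (by positivity) ht.le,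
    ← Real.rpow_mul hAs.le, ← Real.rpow_mul hAt.le,
    div_mul_cancel₀ (-1 : ℝ) hα.ne', Real.rpow_neg_one, Real.rpow_neg_one,
    inv_mul_eq_div, inv_mul_eq_div, div_lt_div_iff₀ hAs hAt]
  have h1 : (β * s) ^ α = β ^ α * s ^ α := Real.mul_rpow hβ.le hs
  have h2 : (β * t) ^ α = β ^ α * t ^ α := Real.mul_rpow hβ.le ht.le
  have hsα : s ^ α < t ^ α := Real.rpow_lt_rpow hs hst hα
  rw [h1, h2]
  nlinarith [hsα]

/-- The strain-limiting response `f(x) = (1 + (β‖x‖)^α)^(-1/α) • x` is strictly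
monotone: `⟪f x - f y, x - y⟫ > 0` whenever `x ≠ y`. -/
theorem strainLimiting_strictly_monotone
    {E : Type*} [NormedAddCommGroup E] [InnerProductSpace ℝ E]
    (α β : ℝ) (hα : 0 < α) (hβ : 0 < β) (x y : E) (hxy : x ≠ y) :
    0 < ⟪(1 + (β * ‖x‖) ^ α) ^ (-1 / α) • x - (1 + (β * ‖y‖) ^ α) ^ (-1 / α) • y,
          x - y⟫ := by
  set a : ℝ := (1 + (β * ‖x‖) ^ α) ^ (-1 / α) with ha_def
  set b : ℝ := (1 + (β * ‖y‖) ^ α) ^ (-1 / α) with hb_def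
  have ha : 0 < a := by rw [ha_def]; positivity
  have hb : 0 < b := by rw [hb_def]; positivity
  have expand : ⟪a • x - b • y, x - y⟫ =
      a * ⟪x, x⟫ + b * ⟪y, y⟫ - (a + b) * ⟪x, y⟫ := by
    simp [inner_sub_left, inner_sub_right, real_inner_smul_left, real_inner_comm y x]
    ring
  rw [expand]
  have hxx : ⟪x, x⟫ = ‖x‖ ^ 2 := real_inner_self_eq_norm_sq x
  have hyy : ⟪y, y⟫ = ‖y‖ ^ 2 := real_inner_self_eq_norm_sq y
  have hCS : ⟪x, y⟫ ≤ ‖x‖ * ‖y‖ := real_inner_le_norm x y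
  rcases lt_trichotomy ‖x‖ ‖y‖ with h | h | h
  · have key : a * ‖x‖ < b * ‖y‖ := strainLimiting_aux α β hα hβ (norm_nonneg x) h
    nlinarith [hCS, mul_pos ha hb]
  · -- norms equal, so a = b
    have hab : a = b := by rw [ha_def, hb_def, h]
    have hsub : (0:ℝ) < ⟪x - y, x - y⟫ := by
      rw [real_inner_self_eq_norm_sq]
      exact pow_pos (norm_pos_iff.mpr (sub_ne_zero.mpr hxy)) 2
    have hexp : ⟪x - y, x - y⟫ = ⟪x, x⟫ + ⟪y, y⟫ - 2 * ⟪x, y⟫ := by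
      simp only [inner_sub_left, inner_sub_right, real_inner_comm y x]
      ring
    rw [hexp] at hsub
    nlinarith [hsub, ha]
  · have key : b * ‖y‖ < a * ‖x‖ := strainLimiting_aux α β hα hβ (norm_nonneg y) h
    nlinarith [hCS, mul_pos ha hb]
end

section
/- Let E be a real inner product space and let α > 0 and β > 0. Define f : E → E by f(x) = (1 + (β·‖x‖)^α)^(−1/α) • x. Then f is Lipschitz continuous with Lipschitz constant 1: ‖f(x) − f(y)‖ ≤ ‖x − y‖ for all x, y ∈ E. In particular ⟨f(x) − f(y), x − y⟩ ≤ ‖x − y‖² for all x, y ∈ E. -/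
open Real Filter Topology Set
open scoped RealInnerProductSpace

private lemma slr_hasDerivAt (α β : ℝ) (hα : 0 < α) (hβ : 0 < β) {r : ℝ} (hr : 0 < r) :
    HasDerivAt (fun r : ℝ => (1 + (β * r) ^ α) ^ (-1 / α) * r)
      ((1 + (β * r) ^ α) ^ (-1 / α - 1)) r := by
  have hbr : 0 < β * r := mul_pos hβ hr
  have hu : 0 < 1 + (β * r) ^ α := by positivity
  have h1 : HasDerivAt (fun r : ℝ => 1 + (β * r) ^ α) (α * (β * r) ^ (α - 1) * β) r := by
    have hinner : HasDerivAt (fun r : ℝ => β * r) β r := by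
      simpa using (hasDerivAt_id r).const_mul β
    have := (Real.hasDerivAt_rpow_const (x := β * r) (p := α) (Or.inl hbr.ne')).comp r hinner
    simpa [mul_comm, mul_assoc] using this.const_add 1
  have h2 : HasDerivAt (fun r : ℝ => (1 + (β * r) ^ α) ^ (-1 / α))
      ((-1/α) * (1 + (β * r) ^ α) ^ (-1/α - 1) * (α * (β * r) ^ (α - 1) * β)) r :=
    by have h := (Real.hasDerivAt_rpow_const (x := 1 + (β * r) ^ α) (p := -1/α) (Or.inl hu.ne')).comp r h1; exact h
  have h3 := h2.mul (hasDerivAt_id r)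
  convert h3 using 1
  · rfl
  · rfl
  · rfl
  have e1 : (β * r) ^ (α - 1) * (β * r) = (β * r) ^ α := by
    rw [← Real.rpow_add_one hbr.ne']; ring_nf
  have e2 : (1 + (β * r) ^ α) ^ (-1 / α)
      = (1 + (β * r) ^ α) ^ (-1 / α - 1) * (1 + (β * r) ^ α) := by
    rw [← Real.rpow_add_one hu.ne']; ring_nf
  have h4 : -1/α * (1 + (β * r) ^ α) ^ (-1/α - 1) * (α * (β * r) ^ (α - 1) * β) * id r
      = -((1 + (β * r) ^ α) ^ (-1/α - 1) * ((β * r) ^ (α - 1) * (β * r))) := by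
    have hαne : α ≠ 0 := hα.ne'
    field_simp
    ring
    rfl
  rw [h4, e1, e2]
  ring


private lemma slr_contOn (α β : ℝ) (hα : 0 < α) (hβ : 0 < β) :
    ContinuousOn (fun r : ℝ => (1 + (β * r) ^ α) ^ (-1 / α) * r) (Ici 0) := by
  intro r hr
  have hr0 : (0:ℝ) ≤ r := hr
  have hbr : 0 ≤ β * r := by positivity
  have hu : 0 < 1 + (β * r) ^ α := by positivity
  have c1 : ContinuousAt (fun r : ℝ => 1 + (β * r) ^ α) r := by
    have : ContinuousAt (fun t : ℝ => t ^ α) (β * r) :=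
      Real.continuousAt_rpow_const _ _ (Or.inr hα.le)
    exact (continuousAt_const.add (this.comp ((continuous_const.mul continuous_id).continuousAt)))
  exact ((c1.rpow_const (Or.inl hu.ne')).mul continuousAt_id).continuousWithinAt

private lemma slr_mono (α β : ℝ) (hα : 0 < α) (hβ : 0 < β) :
    MonotoneOn (fun r : ℝ => (1 + (β * r) ^ α) ^ (-1 / α) * r) (Ici 0) := by
  apply (strictMonoOn_of_deriv_pos (convex_Ici 0) (slr_contOn α β hα hβ) ?_).monotoneOn
  intro r hr
  rw [interior_Ici] at hr
  rw [(slr_hasDerivAt α β hα hβ hr).deriv]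
  have hbr : 0 < β * r := mul_pos hβ hr
  have hu : 0 < 1 + (β * r) ^ α := by positivity
  exact Real.rpow_pos_of_pos hu _

private lemma slr_mono2 (α β : ℝ) (hα : 0 < α) (hβ : 0 < β) :
    MonotoneOn (fun r : ℝ => r - (1 + (β * r) ^ α) ^ (-1 / α) * r) (Ici 0) := by
  apply monotoneOn_of_deriv_nonneg (convex_Ici 0)
  · exact (continuousOn_id.sub (slr_contOn α β hα hβ))
  · rw [interior_Ici]
    intro r hr
    exact ((hasDerivAt_id r).sub (slr_hasDerivAt α β hα hβ hr)).differentiableAt.differentiableWithinAt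
  · rw [interior_Ici]
    intro r hr
    have hd := ((hasDerivAt_id r).sub (slr_hasDerivAt α β hα hβ hr))
    change HasDerivAt (fun r : ℝ => r - (1 + (β * r) ^ α) ^ (-1 / α) * r) _ r at hd
    rw [hd.deriv]
    have hbr : 0 < β * r := mul_pos hβ hr
    have hu : 1 ≤ 1 + (β * r) ^ α := by
      nlinarith [Real.rpow_pos_of_pos hbr α]
    have : (1 + (β * r) ^ α) ^ (-1 / α - 1) ≤ 1 := by
      apply Real.rpow_le_one_of_one_le_of_nonpos hu
      have h5 : 0 < 1/α := by positivity
      rw [neg_div]; linarith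
    linarith



private lemma slr_le_one (α β : ℝ) (hα : 0 < α) (hβ : 0 < β) {X : ℝ} (hX : 0 ≤ X) :
    (1 + (β * X) ^ α) ^ (-1 / α) ≤ 1 := by
  have hbr : 0 ≤ β * X := by positivity
  have hu : 1 ≤ 1 + (β * X) ^ α := by nlinarith [Real.rpow_nonneg hbr α]
  apply Real.rpow_le_one_of_one_le_of_nonpos hu
  have : 0 < 1/α := by positivity
  rw [neg_div]; linarith

private lemma slr_pos (α β : ℝ) (hα : 0 < α) (hβ : 0 < β) {X : ℝ} (hX : 0 ≤ X) :
    0 < (1 + (β * X) ^ α) ^ (-1 / α) := by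
  have hbr : 0 ≤ β * X := by positivity
  have hu : 0 < 1 + (β * X) ^ α := by nlinarith [Real.rpow_nonneg hbr α]
  exact Real.rpow_pos_of_pos hu _

private lemma slr_sq (α β : ℝ) (hα : 0 < α) (hβ : 0 < β) {X Y : ℝ} (hX : 0 ≤ X) (hY : 0 ≤ Y) :
    ((1 + (β * X) ^ α) ^ (-1 / α) * X - (1 + (β * Y) ^ α) ^ (-1 / α) * Y) ^ 2
      ≤ (X - Y) ^ 2 := by
  rcases le_total Y X with h | h
  · have h1 := slr_mono α β hα hβ hY (le_trans hY h : X ∈ Ici 0) h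
    have h2 := slr_mono2 α β hα hβ hY (le_trans hY h : X ∈ Ici 0) h
    simp only at h1 h2
    nlinarith
  · have h1 := slr_mono α β hα hβ hX (le_trans hX h : Y ∈ Ici 0) h
    have h2 := slr_mono2 α β hα hβ hX (le_trans hX h : Y ∈ Ici 0) h
    simp only at h1 h2
    nlinarith

/-- The strain-limiting response `f(x) = (1 + (β‖x‖)^α)^(-1/α) • x` is
1-Lipschitz, and in particular `⟪f x - f y, x - y⟫ ≤ ‖x - y‖²`. -/
theorem strainLimiting_lipschitz
    {E : Type*} [NormedAddCommGroup E] [InnerProductSpace ℝ E]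
    (α β : ℝ) (hα : 0 < α) (hβ : 0 < β) :
    (∀ x y : E,
      ‖(1 + (β * ‖x‖) ^ α) ^ (-1 / α) • x - (1 + (β * ‖y‖) ^ α) ^ (-1 / α) • y‖
        ≤ ‖x - y‖) ∧
    (∀ x y : E,
      ⟪(1 + (β * ‖x‖) ^ α) ^ (-1 / α) • x - (1 + (β * ‖y‖) ^ α) ^ (-1 / α) • y,
        x - y⟫ ≤ ‖x - y‖ ^ 2) := by
  have key : ∀ x y : E,
      ‖(1 + (β * ‖x‖) ^ α) ^ (-1 / α) • x - (1 + (β * ‖y‖) ^ α) ^ (-1 / α) • y‖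
        ≤ ‖x - y‖ := by
    intro x y
    set a := (1 + (β * ‖x‖) ^ α) ^ (-1 / α) with ha
    set b := (1 + (β * ‖y‖) ^ α) ^ (-1 / α) with hb
    have hX : (0:ℝ) ≤ ‖x‖ := norm_nonneg x
    have hY : (0:ℝ) ≤ ‖y‖ := norm_nonneg y
    have ha1 : a ≤ 1 := slr_le_one α β hα hβ hX
    have hb1 : b ≤ 1 := slr_le_one α β hα hβ hY
    have ha0 : 0 < a := slr_pos α β hα hβ hX
    have hb0 : 0 < b := slr_pos α β hα hβ hY
    have hsq : (a * ‖x‖ - b * ‖y‖) ^ 2 ≤ (‖x‖ - ‖y‖) ^ 2 := slr_sq α β hα hβ hX hY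
    have hip : ⟪x, y⟫ ≤ ‖x‖ * ‖y‖ := real_inner_le_norm x y
    have e1 : ‖a • x - b • y‖ ^ 2
        = a ^ 2 * ‖x‖ ^ 2 - 2 * (a * b * ⟪x, y⟫) + b ^ 2 * ‖y‖ ^ 2 := by
      rw [@norm_sub_sq_real, real_inner_smul_left, real_inner_smul_right,
        norm_smul, norm_smul, Real.norm_eq_abs, Real.norm_eq_abs,
        abs_of_pos ha0, abs_of_pos hb0]
      ring
    have e2 : ‖x - y‖ ^ 2 = ‖x‖ ^ 2 - 2 * ⟪x, y⟫ + ‖y‖ ^ 2 := by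
      rw [@norm_sub_sq_real]
    have hab1 : a * b ≤ 1 := mul_le_one₀ ha1 hb0.le hb1
    have hkey : 0 ≤ (1 - a * b) * (‖x‖ * ‖y‖ - ⟪x, y⟫) :=
      mul_nonneg (by linarith) (by linarith)
    have hnormsq : ‖a • x - b • y‖ ^ 2 ≤ ‖x - y‖ ^ 2 := by
      rw [e1, e2]
      nlinarith [hsq, hkey]
    exact (abs_le_of_sq_le_sq' hnormsq (norm_nonneg _)).2
  refine ⟨key, fun x y => ?_⟩
  calc ⟪(1 + (β * ‖x‖) ^ α) ^ (-1 / α) • x - (1 + (β * ‖y‖) ^ α) ^ (-1 / α) • y, x - y⟫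
      ≤ ‖(1 + (β * ‖x‖) ^ α) ^ (-1 / α) • x - (1 + (β * ‖y‖) ^ α) ^ (-1 / α) • y‖ * ‖x - y‖ :=
        real_inner_le_norm _ _
    _ ≤ ‖x - y‖ * ‖x - y‖ := by
        exact mul_le_mul_of_nonneg_right (key x y) (norm_nonneg _)
    _ = ‖x - y‖ ^ 2 := by ring
end

section
/- Let E be a real inner product space and let α > 0 and β > 0. Define the potential φ : E → ℝ by φ(x) = ∫₀^{‖x‖} t·(1 + (β·t)^α)^(−1/α) dt. Then φ is Fréchet differentiable at every x ∈ E, and its derivative at x is the continuous linear functional v ↦ ⟨f(x), v⟩, where f(x) = (1 + (β·‖x‖)^α)^(−1/α) • x. In other words, the strain-limiting response map f is the gradient of the scalar potential φ, so the model is hyperelastic. -/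
open Real Filter Topology Set MeasureTheory
open intervalIntegral

/-- The potential `φ(x) = ∫₀^{‖x‖} t (1 + (βt)^α)^(-1/α) dt` is Fréchet
differentiable at every `x`, with derivative `v ↦ ⟪f x, v⟫` where
`f x = (1 + (β‖x‖)^α)^(-1/α) • x`: the strain-limiting response is the gradient
of a scalar potential, i.e. the model is hyperelastic. -/
theorem strainLimiting_potential_hasFDerivAt
    {E : Type*} [NormedAddCommGroup E] [InnerProductSpace ℝ E]
    (α β : ℝ) (hα : 0 < α) (hβ : 0 < β) (x : E) :
    HasFDerivAt
      (fun y : E => ∫ t in (0 : ℝ)..‖y‖, t * (1 + (β * t) ^ α) ^ (-1 / α))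
      (innerSL ℝ ((1 + (β * ‖x‖) ^ α) ^ (-1 / α) • x)) x := by
  set g : ℝ → ℝ := fun t => t * (1 + (β * t) ^ α) ^ (-1 / α) with hgdef
  have hpos : ∀ t : ℝ, 0 ≤ t → (0 : ℝ) < 1 + (β * t) ^ α := by
    intro t ht
    have : (0:ℝ) ≤ (β * t) ^ α := Real.rpow_nonneg (by positivity) _
    linarith
  have hcont : ∀ t : ℝ, 0 ≤ t → ContinuousAt g t := by
    intro t ht
    have c1 : ContinuousAt (fun s : ℝ => (β * s) ^ α) t :=
      ((continuous_const.mul continuous_id).continuousAt).rpow_const (Or.inr hα.le)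
    have c2 : ContinuousAt (fun s : ℝ => (1 + (β * s) ^ α) ^ (-1 / α)) t :=
      (continuousAt_const.add c1).rpow_const (Or.inl (hpos t ht).ne')
    exact continuousAt_id.mul c2
  have hInt : ∀ r : ℝ, 0 ≤ r → IntervalIntegrable g volume 0 r := by
    intro r hr
    apply ContinuousOn.intervalIntegrable
    intro t ht
    rw [uIcc_of_le hr] at ht
    exact (hcont t ht.1).continuousWithinAt
  rcases eq_or_ne x 0 with rfl | hx
  · have h0 : (innerSL ℝ ((1 + (β * ‖(0:E)‖) ^ α) ^ (-1 / α) • (0:E))) = 0 := by simp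
    rw [h0, hasFDerivAt_iff_isLittleO_nhds_zero]
    simp only [zero_add, norm_zero, intervalIntegral.integral_same,
      ContinuousLinearMap.zero_apply, sub_zero]
    rw [Asymptotics.isLittleO_iff]
    intro ε hε
    filter_upwards [Metric.ball_mem_nhds 0 (show (0:ℝ) < 2 * ε by linarith)] with y hy
    rw [mem_ball_zero_iff] at hy
    have hgle : ∀ t ∈ Icc (0:ℝ) ‖y‖, g t ≤ t := by
      intro t ht
      have h1 : (1 + (β * t) ^ α) ^ (-1 / α) ≤ 1 := by
        apply Real.rpow_le_one_of_one_le_of_nonpos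
        · have : (0:ℝ) ≤ (β * t) ^ α := Real.rpow_nonneg (mul_nonneg hβ.le ht.1) _
          linarith
        · rw [neg_div]
          exact neg_nonpos.mpr (div_nonneg zero_le_one hα.le)
      calc g t = t * (1 + (β * t) ^ α) ^ (-1 / α) := rfl
        _ ≤ t * 1 := mul_le_mul_of_nonneg_left h1 ht.1
        _ = t := mul_one t
    have hmono : ∫ t in (0:ℝ)..‖y‖, g t ≤ ∫ t in (0:ℝ)..‖y‖, t := by
      apply intervalIntegral.integral_mono_on (norm_nonneg y) (hInt _ (norm_nonneg y))
        intervalIntegrable_id hgle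
    have hnn : 0 ≤ ∫ t in (0:ℝ)..‖y‖, g t := by
      apply intervalIntegral.integral_nonneg (norm_nonneg y)
      intro t ht
      exact mul_nonneg ht.1 (Real.rpow_nonneg (hpos t ht.1).le _)
    rw [integral_id] at hmono
    rw [Real.norm_of_nonneg hnn]
    nlinarith [norm_nonneg y]
  · have hx0 : (0:ℝ) < ‖x‖ := norm_pos_iff.mpr hx
    have hmeas : Measurable g := by
      apply measurable_id.mul
      exact (measurable_const.add ((measurable_const.mul measurable_id).pow_const α)).pow_const _
    have hG : HasDerivAt (fun s : ℝ => ∫ t in (0:ℝ)..s, g t) (g ‖x‖) ‖x‖ :=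
      intervalIntegral.integral_hasDerivAt_right (hInt _ (norm_nonneg x))
        ⟨univ, univ_mem, hmeas.aestronglyMeasurable.restrict⟩ (hcont _ (norm_nonneg x))
    have hnormsq : HasFDerivAt (fun y : E => ‖y‖ ^ 2) (2 • innerSL ℝ x) x :=
      (hasStrictFDerivAt_norm_sq x).hasFDerivAt
    have hsqrt := hnormsq.sqrt (by positivity : ‖x‖ ^ 2 ≠ 0)
    have hnorm : HasFDerivAt (fun y : E => ‖y‖) (innerSL ℝ (‖x‖⁻¹ • x)) x := by
      have heq : (fun y : E => √(‖y‖ ^ 2)) = fun y : E => ‖y‖ := by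
        funext y; exact Real.sqrt_sq (norm_nonneg y)
      rw [heq] at hsqrt
      convert hsqrt using 1
      ext v
      simp only [innerSL_apply_apply, ContinuousLinearMap.coe_smul', Pi.smul_apply,
        real_inner_smul_left, smul_eq_mul, Real.sqrt_sq (norm_nonneg x),
        ContinuousLinearMap.smul_apply]
      field_simp
      ring
    have := hG.comp_hasFDerivAt x hnorm
    refine this.congr_fderiv ?_
    ext v
    simp only [innerSL_apply_apply, ContinuousLinearMap.coe_smul', Pi.smul_apply,
      real_inner_smul_left, smul_eq_mul, hgdef]
    field_simp
end

section
/- Let E be a real inner product space and let α > 0 and β > 0. Then the potential φ : E → ℝ defined by φ(x) = ∫₀^{‖x‖} t·(1 + (β·t)^α)^(−1/α) dt is a convex function on E. -/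
open Real Filter Topology Set MeasureTheory

private lemma sl_cont {α β : ℝ} (hα : 0 < α) (hβ : 0 < β) {t : ℝ} (ht : 0 ≤ t) :
    ContinuousAt (fun t : ℝ => t * (1 + (β * t) ^ α) ^ (-1 / α)) t := by
  have h1 : ContinuousAt (fun t : ℝ => (β * t) ^ α) t :=
    ContinuousAt.rpow_const ((continuous_const.mul continuous_id).continuousAt) (Or.inr hα.le)
  have h2 : ContinuousAt (fun t : ℝ => 1 + (β * t) ^ α) t := continuousAt_const.add h1
  have hpos : (0:ℝ) < 1 + (β * t) ^ α := by
    have : (0:ℝ) ≤ (β * t) ^ α := Real.rpow_nonneg (by positivity) _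
    linarith
  have h3 : ContinuousAt (fun t : ℝ => (1 + (β * t) ^ α) ^ (-1 / α)) t :=
    ContinuousAt.rpow_const h2 (Or.inl hpos.ne')
  exact continuousAt_id.mul h3

private lemma sl_rewrite {α β : ℝ} (hα : 0 < α) (hβ : 0 < β) {t : ℝ} (ht : 0 ≤ t) :
    t * (1 + (β * t) ^ α) ^ (-1 / α) = (t ^ α / (1 + β ^ α * t ^ α)) ^ α⁻¹ := by
  have hbt : (β * t) ^ α = β ^ α * t ^ α := Real.mul_rpow hβ.le ht
  have hpos : (0:ℝ) < 1 + β ^ α * t ^ α := by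
    have : (0:ℝ) ≤ β ^ α * t ^ α := by positivity
    linarith
  rw [hbt, neg_div, one_div, div_eq_mul_inv,
    Real.mul_rpow (Real.rpow_nonneg ht α) (inv_nonneg.2 hpos.le),
    Real.rpow_rpow_inv ht hα.ne', Real.inv_rpow hpos.le, ← Real.rpow_neg hpos.le]

private lemma sl_mono {α β : ℝ} (hα : 0 < α) (hβ : 0 < β) :
    MonotoneOn (fun t : ℝ => t * (1 + (β * t) ^ α) ^ (-1 / α)) (Ici 0) := by
  intro a ha b hb hab
  simp only [mem_Ici] at ha hb
  simp only []
  rw [sl_rewrite hα hβ ha, sl_rewrite hα hβ hb]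
  have hAa : (0:ℝ) < 1 + β ^ α * a ^ α := by
    have : (0:ℝ) ≤ β ^ α * a ^ α := by positivity
    linarith
  have hAb : (0:ℝ) < 1 + β ^ α * b ^ α := by
    have : (0:ℝ) ≤ β ^ α * b ^ α := by positivity
    linarith
  have hab' : a ^ α ≤ b ^ α := Real.rpow_le_rpow ha hab hα.le
  have key : a ^ α / (1 + β ^ α * a ^ α) ≤ b ^ α / (1 + β ^ α * b ^ α) := by
    rw [div_le_div_iff₀ hAa hAb]
    have hc : (0:ℝ) ≤ β ^ α := Real.rpow_nonneg hβ.le _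
    nlinarith
  exact Real.rpow_le_rpow (by positivity) key (inv_nonneg.2 hα.le)

/-- The stored-energy potential `φ(x) = ∫₀^{‖x‖} t (1 + (βt)^α)^(-1/α) dt` of the
strain-limiting model is convex on `E`. -/
theorem strainLimiting_potential_convex
    {E : Type*} [NormedAddCommGroup E] [InnerProductSpace ℝ E]
    (α β : ℝ) (hα : 0 < α) (hβ : 0 < β) :
    ConvexOn ℝ Set.univ
      (fun x : E => ∫ t in (0 : ℝ)..‖x‖, t * (1 + (β * t) ^ α) ^ (-1 / α)) := by
  set f : ℝ → ℝ := fun t => t * (1 + (β * t) ^ α) ^ (-1 / α) with hf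
  set F : ℝ → ℝ := fun r => ∫ t in (0:ℝ)..r, f t with hF
  have hfnn : ∀ t : ℝ, 0 ≤ t → 0 ≤ f t := by
    intro t ht
    have : (0:ℝ) ≤ (1 + (β * t) ^ α) ^ (-1 / α) := by
      apply Real.rpow_nonneg
      have : (0:ℝ) ≤ (β * t) ^ α := Real.rpow_nonneg (by positivity) _
      linarith
    exact mul_nonneg ht this
  have hmeasf : Measurable f := by
    rw [hf]; fun_prop
  have hint : ∀ r : ℝ, 0 ≤ r → IntervalIntegrable f volume 0 r := by
    intro r hr
    apply ContinuousOn.intervalIntegrable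
    rw [uIcc_of_le hr]
    exact fun t ht => (sl_cont hα hβ ht.1).continuousWithinAt
  have hderiv : ∀ r : ℝ, 0 ≤ r → HasDerivAt F (f r) r := by
    intro r hr
    exact intervalIntegral.integral_hasDerivAt_right (hint r hr)
      (hmeasf.stronglyMeasurable.stronglyMeasurableAtFilter) (sl_cont hα hβ hr)
  have hFconv : ConvexOn ℝ (Ici 0) F := by
    apply MonotoneOn.convexOn_of_deriv (convex_Ici 0)
    · exact fun r hr => (hderiv r hr).continuousAt.continuousWithinAt
    · rw [interior_Ici]
      exact fun r hr => (hderiv r (le_of_lt hr)).differentiableAt.differentiableWithinAt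
    · rw [interior_Ici]
      intro a ha b hb hab
      rw [(hderiv a (le_of_lt ha)).deriv, (hderiv b (le_of_lt hb)).deriv]
      exact sl_mono hα hβ (mem_Ici.2 (le_of_lt ha)) (mem_Ici.2 (le_of_lt hb)) hab
  have hFmono : MonotoneOn F (Ici 0) := by
    intro a ha b hb hab
    simp only [mem_Ici] at ha hb
    have hsub := intervalIntegral.integral_interval_sub_left (hint b hb) (hint a ha)
    have hnn : 0 ≤ ∫ t in a..b, f t := by
      apply intervalIntegral.integral_nonneg hab
      intro t ht
      exact hfnn t (le_trans ha ht.1)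
    have : F b - F a = ∫ t in a..b, f t := hsub
    linarith
  constructor
  · exact convex_univ
  · intro x _ y _ a b ha hb hab
    have hx0 : ‖a • x + b • y‖ ∈ Ici (0:ℝ) := norm_nonneg _
    have hcomb : a * ‖x‖ + b * ‖y‖ ∈ Ici (0:ℝ) := by
      simp only [mem_Ici]; positivity
    have hle : ‖a • x + b • y‖ ≤ a * ‖x‖ + b * ‖y‖ := by
      calc ‖a • x + b • y‖ ≤ ‖a • x‖ + ‖b • y‖ := norm_add_le _ _
        _ = a * ‖x‖ + b * ‖y‖ := by
          rw [norm_smul, norm_smul, Real.norm_of_nonneg ha, Real.norm_of_nonneg hb]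
    calc F ‖a • x + b • y‖ ≤ F (a * ‖x‖ + b * ‖y‖) := hFmono hx0 hcomb hle
      _ ≤ a * F ‖x‖ + b * F ‖y‖ := hFconv.2 (norm_nonneg x) (norm_nonneg y) ha hb hab
end

section
/- Let E be a real inner product space and let α > 0 and β > 0. Define g on the open ball B = {y ∈ E : ‖y‖ < 1/β} by g(y) = (1 − (β·‖y‖)^α)^(−1/α) • y. Then g is strictly monotone on B: for all y₁, y₂ ∈ B with y₁ ≠ y₂, the inner product ⟨g(y₁) − g(y₂), y₁ − y₂⟩ is strictly positive. -/
/-!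
Write `g(y) = φ(‖y‖) • y` with `φ(r) = (1 - (βr)^α)^(-1/α)`, which is positive and nondecreasing
on `[0, 1/β)`. For any scalars `c, d` one has the polarization-type identity
`⟪c • x - d • y, x - y⟫ = (c + d)/2 · ‖x - y‖² + (c - d)(‖x‖² - ‖y‖²)/2`.
With `c = φ(‖x‖)`, `d = φ(‖y‖)` the first term is positive for `x ≠ y` and the second is
nonnegative because `φ` and `r ↦ r²` are both nondecreasing on `[0, ∞)`.
-/

open Real Set
open scoped RealInnerProductSpace

section RadialMap

variable {E : Type*} [NormedAddCommGroup E] [InnerProductSpace ℝ E]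

theorem real_inner_smul_sub_smul_sub (c d : ℝ) (x y : E) :
    ⟪c • x - d • y, x - y⟫ =
      (c + d) / 2 * ‖x - y‖ ^ 2 + (c - d) * (‖x‖ ^ 2 - ‖y‖ ^ 2) / 2 := by
  rw [norm_sub_sq_real]
  simp only [inner_sub_left, inner_sub_right, real_inner_smul_left, real_inner_self_eq_norm_sq,
    real_inner_comm x y]
  ring

theorem MonotoneOn.mul_sq_sub_sq_nonneg {φ : ℝ → ℝ} {s : Set ℝ} (hφ : MonotoneOn φ s)
    {a b : ℝ} (ha : a ∈ s) (hb : b ∈ s) (ha₀ : 0 ≤ a) (hb₀ : 0 ≤ b) :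
    0 ≤ (φ a - φ b) * (a ^ 2 - b ^ 2) := by
  rcases le_total a b with hab | hba
  · exact mul_nonneg_of_nonpos_of_nonpos (sub_nonpos.2 (hφ ha hb hab))
      (sub_nonpos.2 (pow_le_pow_left₀ ha₀ hab 2))
  · exact mul_nonneg (sub_nonneg.2 (hφ hb ha hba)) (sub_nonneg.2 (pow_le_pow_left₀ hb₀ hba 2))

theorem real_inner_radial_sub_pos {φ : ℝ → ℝ} {s : Set ℝ} (hpos : ∀ r ∈ s, 0 < φ r)
    (hmono : MonotoneOn φ s) {x y : E} (hx : ‖x‖ ∈ s) (hy : ‖y‖ ∈ s) (hne : x ≠ y) :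
    0 < ⟪φ ‖x‖ • x - φ ‖y‖ • y, x - y⟫ := by
  rw [real_inner_smul_sub_smul_sub]
  have hdist : 0 < ‖x - y‖ ^ 2 := by positivity [sub_ne_zero.2 hne]
  have hsum : 0 < (φ ‖x‖ + φ ‖y‖) / 2 := by linarith [hpos _ hx, hpos _ hy]
  have hcross := hmono.mul_sq_sub_sq_nonneg hx hy (norm_nonneg x) (norm_nonneg y)
  positivity

end RadialMap

section HyperelasticFactor

variable {α β : ℝ}

theorem one_sub_rpow_mul_pos (hα : 0 < α) (hβ : 0 < β) {r : ℝ} (hr : r ∈ Ico 0 (1 / β)) :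
    0 < 1 - (β * r) ^ α := by
  have hβr : β * r < 1 := by
    have := (lt_div_iff₀ hβ).1 hr.2
    linarith
  linarith [rpow_lt_one (mul_nonneg hβ.le hr.1) hβr hα]

theorem rpow_one_sub_rpow_mul_pos (hα : 0 < α) (hβ : 0 < β) {r : ℝ} (hr : r ∈ Ico 0 (1 / β)) :
    0 < (1 - (β * r) ^ α) ^ (-1 / α) :=
  rpow_pos_of_pos (one_sub_rpow_mul_pos hα hβ hr) _

theorem monotoneOn_rpow_one_sub_rpow_mul (hα : 0 < α) (hβ : 0 < β) :
    MonotoneOn (fun r => (1 - (β * r) ^ α) ^ (-1 / α)) (Ico 0 (1 / β)) := by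
  intro r hr s hs hrs
  have hexp : -1 / α ≤ 0 := div_nonpos_of_nonpos_of_nonneg (by norm_num) hα.le
  have hpow : (β * r) ^ α ≤ (β * s) ^ α :=
    rpow_le_rpow (mul_nonneg hβ.le hr.1) (mul_le_mul_of_nonneg_left hrs hβ.le) hα.le
  exact rpow_le_rpow_of_nonpos (one_sub_rpow_mul_pos hα hβ hs) (by linarith) hexp

end HyperelasticFactor

/-- The hyperelastic response `g(y) = (1 - (β‖y‖)^α)^(-1/α) • y` is strictly
monotone on the open ball `{y : ‖y‖ < 1/β}`. -/
theorem hyperelastic_strictly_monotone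
    {E : Type*} [NormedAddCommGroup E] [InnerProductSpace ℝ E]
    (α β : ℝ) (hα : 0 < α) (hβ : 0 < β)
    (y₁ y₂ : E) (h₁ : ‖y₁‖ < 1 / β) (h₂ : ‖y₂‖ < 1 / β) (hne : y₁ ≠ y₂) :
    0 < ⟪(1 - (β * ‖y₁‖) ^ α) ^ (-1 / α) • y₁ -
          (1 - (β * ‖y₂‖) ^ α) ^ (-1 / α) • y₂, y₁ - y₂⟫ :=
  real_inner_radial_sub_pos (fun _ hr => rpow_one_sub_rpow_mul_pos hα hβ hr)
    (monotoneOn_rpow_one_sub_rpow_mul hα hβ) ⟨norm_nonneg y₁, h₁⟩ ⟨norm_nonneg y₂, h₂⟩ hne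
end

section
/- Let E be a finite-dimensional real inner product space, let J : E → E be a self-adjoint positive-definite linear operator (the square root of the compliance tensor K = J ∘ J), and let α > 0 and β > 0. Define the strain-limiting response F : E → E by F(σ) = (1 + β^α·‖J σ‖^α)^(−1/α) • J(J σ). Then F is strictly monotone: for all σ₁, σ₂ ∈ E with σ₁ ≠ σ₂, the inner product ⟨F(σ₁) − F(σ₂), σ₁ − σ₂⟩ is strictly positive. -/
open Real Set
open scoped RealInnerProductSpace

/-!
With `u = J σ₁`, `v = J σ₂` and `φ t = (1 + β ^ α * t ^ α) ^ (-1 / α)`, self-adjointness of `J`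
turns the pairing into `⟪φ ‖u‖ • u - φ ‖v‖ • v, u - v⟫`. By Cauchy–Schwarz this is at least
`(‖u‖ φ ‖u‖ - ‖v‖ φ ‖v‖) (‖u‖ - ‖v‖)`, which is positive because
`t φ t = (t ^ α / (1 + β ^ α t ^ α)) ^ (1 / α)` is strictly increasing in `t ≥ 0`; positive
definiteness of `J` gives `u ≠ v`.
-/

lemma mul_one_add_mul_rpow_rpow_eq {α c t : ℝ} (hα : α ≠ 0) (hc : 0 ≤ c) (ht : 0 ≤ t) :
    t * (1 + c * t ^ α) ^ (-1 / α) = (t ^ α / (1 + c * t ^ α)) ^ α⁻¹ := by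
  have hD : 0 ≤ 1 + c * t ^ α := by positivity
  rw [div_rpow (by positivity) hD, rpow_rpow_inv ht hα, neg_div, one_div, rpow_neg hD,
    div_eq_mul_inv]

lemma strictMonoOn_div_one_add_mul {c : ℝ} (hc : 0 ≤ c) :
    StrictMonoOn (fun x : ℝ => x / (1 + c * x)) (Ici 0) := by
  intro x hx y hy hxy
  simp only [mem_Ici] at hx hy
  rw [div_lt_div_iff₀ (by positivity) (by positivity)]
  linarith

lemma strictMonoOn_mul_one_add_mul_rpow_rpow {α c : ℝ} (hα : 0 < α) (hc : 0 ≤ c) :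
    StrictMonoOn (fun t : ℝ => t * (1 + c * t ^ α) ^ (-1 / α)) (Ici 0) := by
  intro s hs t ht hst
  simp only [mem_Ici] at hs ht
  simp only [mul_one_add_mul_rpow_rpow_eq hα.ne' hc hs,
    mul_one_add_mul_rpow_rpow_eq hα.ne' hc ht]
  refine rpow_lt_rpow (by positivity) ?_ (inv_pos.2 hα)
  exact strictMonoOn_div_one_add_mul hc (rpow_nonneg hs α) (rpow_nonneg ht α)
    (rpow_lt_rpow hs hst hα)

section InnerProductSpace

variable {E : Type*} [NormedAddCommGroup E] [InnerProductSpace ℝ E]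

lemma inner_smul_norm_sub_smul_norm_sub_pos {φ : ℝ → ℝ} (hφ : ∀ t, 0 ≤ t → 0 < φ t)
    (hmono : StrictMonoOn (fun t => t * φ t) (Ici 0)) {u v : E} (huv : u ≠ v) :
    0 < ⟪φ ‖u‖ • u - φ ‖v‖ • v, u - v⟫ := by
  set a := ‖u‖
  set b := ‖v‖
  have hφa := hφ a (norm_nonneg u)
  have hφb := hφ b (norm_nonneg v)
  have hexpand :
      ⟪φ a • u - φ b • v, u - v⟫ = φ a * a ^ 2 - (φ a + φ b) * ⟪u, v⟫ + φ b * b ^ 2 := by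
    simp only [inner_sub_left, inner_sub_right, real_inner_smul_left, real_inner_self_eq_norm_sq,
      real_inner_comm u v]
    ring
  rw [hexpand]
  rcases eq_or_ne a b with hab | hab
  · -- equal norms: the expression is `φ a * ‖u - v‖ ^ 2`
    have hsq : ‖u - v‖ ^ 2 = a ^ 2 - 2 * ⟪u, v⟫ + b ^ 2 := norm_sub_sq_real u v
    have hpos : 0 < φ a * ‖u - v‖ ^ 2 := mul_pos hφa (pow_pos (norm_sub_pos_iff.2 huv) 2)
    rw [← hab] at hsq ⊢
    nlinarith
  · -- Cauchy–Schwarz leaves `(a φ a - b φ b) (a - b)`, positive by strict monotonicity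
    have hcs : (φ a + φ b) * ⟪u, v⟫ ≤ (φ a + φ b) * (a * b) :=
      mul_le_mul_of_nonneg_left (real_inner_le_norm u v) (by positivity)
    have hprod : 0 < (a * φ a - b * φ b) * (a - b) := by
      rcases hab.lt_or_gt with h | h
      · exact mul_pos_of_neg_of_neg
          (sub_neg.2 (hmono (norm_nonneg u) (norm_nonneg v) h)) (sub_neg.2 h)
      · exact mul_pos (sub_pos.2 (hmono (norm_nonneg v) (norm_nonneg u) h)) (sub_pos.2 h)
    nlinarith

lemma ContinuousLinearMap.injective_of_inner_map_self_pos {J : E →L[ℝ] E}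
    (hpos : ∀ x : E, x ≠ 0 → 0 < ⟪J x, x⟫) : Function.Injective J := by
  intro x y hxy
  by_contra hne
  have hdiff := hpos (x - y) (sub_ne_zero.2 hne)
  rw [map_sub, hxy, sub_self, inner_zero_left] at hdiff
  exact hdiff.false

end InnerProductSpace

theorem strainLimiting_compliance_strictly_monotone_general
    {E : Type*} [NormedAddCommGroup E] [InnerProductSpace ℝ E]
    (J : E →L[ℝ] E) (hsym : ∀ x y : E, ⟪J x, y⟫ = ⟪x, J y⟫)
    (hpos : ∀ x : E, x ≠ 0 → 0 < ⟪J x, x⟫)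
    (α β : ℝ) (hα : 0 < α) (hβ : 0 < β)
    (σ₁ σ₂ : E) (hne : σ₁ ≠ σ₂) :
    0 < ⟪(1 + β ^ α * ‖J σ₁‖ ^ α) ^ (-1 / α) • J (J σ₁) -
          (1 + β ^ α * ‖J σ₂‖ ^ α) ^ (-1 / α) • J (J σ₂), σ₁ - σ₂⟫ := by
  have hc : 0 ≤ β ^ α := rpow_nonneg hβ.le α
  have hJne : J σ₁ ≠ J σ₂ := (J.injective_of_inner_map_self_pos hpos).ne hne
  have key := inner_smul_norm_sub_smul_norm_sub_pos
    (φ := fun t => (1 + β ^ α * t ^ α) ^ (-1 / α))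
    (fun t ht => rpow_pos_of_pos (by positivity) _)
    (strictMonoOn_mul_one_add_mul_rpow_rpow hα hc) hJne
  rwa [← map_sub J σ₁ σ₂, ← hsym, map_sub, map_smul, map_smul] at key

/-- With `J` a self-adjoint positive-definite operator (square root of the
compliance tensor `K = J ∘ J`), the strain-limiting response
`F(σ) = (1 + β^α ‖Jσ‖^α)^(-1/α) • J(Jσ)` is strictly monotone. -/
theorem strainLimiting_compliance_strictly_monotone
    {E : Type*} [NormedAddCommGroup E] [InnerProductSpace ℝ E]
    [FiniteDimensional ℝ E]
    (J : E →L[ℝ] E) (hsym : ∀ x y : E, ⟪J x, y⟫ = ⟪x, J y⟫)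
    (hpos : ∀ x : E, x ≠ 0 → 0 < ⟪J x, x⟫)
    (α β : ℝ) (hα : 0 < α) (hβ : 0 < β)
    (σ₁ σ₂ : E) (hne : σ₁ ≠ σ₂) :
    0 < ⟪(1 + β ^ α * ‖J σ₁‖ ^ α) ^ (-1 / α) • J (J σ₁) -
          (1 + β ^ α * ‖J σ₂‖ ^ α) ^ (-1 / α) • J (J σ₂), σ₁ - σ₂⟫ :=
  strainLimiting_compliance_strictly_monotone_general J hsym hpos α β hα hβ σ₁ σ₂ hne
end

section
/- Let E be a finite-dimensional real inner product space, let J : E → E be a self-adjoint positive-definite linear operator, and let α > 0 and β > 0. Define F : E → E by F(σ) = (1 + β^α·‖J σ‖^α)^(−1/α) • J(J σ). Then F satisfies the Lipschitz-type continuity estimate ⟨F(σ₁) − F(σ₂), σ₁ − σ₂⟩ ≤ ‖J‖² · ‖σ₁ − σ₂‖² for all σ₁, σ₂ ∈ E, where ‖J‖ denotes the operator norm of J. -/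
/-!
Write `a = Jσ₁`, `b = Jσ₂` and `φ(t) = (1 + β^α t^α)^(-1/α)`. Self-adjointness moves one `J`
across the inner product, so the left side is `⟪φ(‖a‖) a - φ(‖b‖) b, a - b⟫`. Since `φ ≤ 1` is
antitone, the radial map `x ↦ (1 - φ(‖x‖)) x` is monotone (Cauchy–Schwarz reduces this to
monotonicity of `t ↦ (1 - φ(t)) t`); this says exactly that the left side is at most
`‖a - b‖²`, and `‖a - b‖ ≤ ‖J‖ ‖σ₁ - σ₂‖`.
-/

open Real Set
open scoped RealInnerProductSpace

section RadialMaps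

variable {E : Type*} [NormedAddCommGroup E] [InnerProductSpace ℝ E]

theorem real_inner_smul_sub_smul_sub_nonneg {a b : E} {s t : ℝ} (hs : 0 ≤ s) (ht : 0 ≤ t)
    (hnorm : 0 ≤ (s * ‖a‖ - t * ‖b‖) * (‖a‖ - ‖b‖)) : 0 ≤ ⟪s • a - t • b, a - b⟫ := by
  have hexpand : ⟪s • a - t • b, a - b⟫ = s * ‖a‖ ^ 2 - (s + t) * ⟪a, b⟫ + t * ‖b‖ ^ 2 := by
    simp only [inner_sub_left, inner_sub_right, real_inner_smul_left,
      real_inner_self_eq_norm_sq, real_inner_comm a b]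
    ring
  have hcs : (s + t) * ⟪a, b⟫ ≤ (s + t) * (‖a‖ * ‖b‖) :=
    mul_le_mul_of_nonneg_left (real_inner_le_norm a b) (add_nonneg hs ht)
  rw [hexpand]
  nlinarith

theorem real_inner_smul_sub_smul_sub_le_norm_sub_sq {φ : ℝ → ℝ} (hφ : AntitoneOn φ (Ici 0))
    (hφ_le : ∀ t, 0 ≤ t → φ t ≤ 1) (a b : E) :
    ⟪φ ‖a‖ • a - φ ‖b‖ • b, a - b⟫ ≤ ‖a - b‖ ^ 2 := by
  have hmono : MonotoneOn (fun t => (1 - φ t) * t) (Ici 0) :=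
    MonotoneOn.mul (fun x hx y hy hxy => sub_le_sub_left (hφ hx hy hxy) 1) monotoneOn_id
      (fun t ht => sub_nonneg.2 (hφ_le t ht)) (fun _ ht => ht)
  have hnorm : 0 ≤ ((1 - φ ‖a‖) * ‖a‖ - (1 - φ ‖b‖) * ‖b‖) * (‖a‖ - ‖b‖) :=
    (monovaryOn_id_iff.2 hmono).sub_mul_sub_nonneg (norm_nonneg b) (norm_nonneg a)
  have hcompl := real_inner_smul_sub_smul_sub_nonneg
    (sub_nonneg.2 (hφ_le _ (norm_nonneg a))) (sub_nonneg.2 (hφ_le _ (norm_nonneg b))) hnorm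
  rw [sub_smul, sub_smul, one_smul, one_smul, sub_sub_sub_comm, inner_sub_left,
    real_inner_self_eq_norm_sq] at hcompl
  linarith

end RadialMaps

section StrainFactor

noncomputable def strainFactor (α β t : ℝ) : ℝ := (1 + β ^ α * t ^ α) ^ (-1 / α)

variable {α β : ℝ}

theorem strainFactor_le_one (hα : 0 < α) (hβ : 0 < β) {t : ℝ} (ht : 0 ≤ t) :
    strainFactor α β t ≤ 1 := by
  refine rpow_le_one_of_one_le_of_nonpos ?_ (div_nonpos_of_nonpos_of_nonneg (by norm_num) hα.le)
  have := mul_nonneg (rpow_nonneg hβ.le α) (rpow_nonneg ht α)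
  linarith

theorem antitoneOn_strainFactor (hα : 0 < α) (hβ : 0 < β) :
    AntitoneOn (strainFactor α β) (Ici 0) := by
  intro s hs t _ hst
  refine rpow_le_rpow_of_nonpos ?_ ?_ (div_nonpos_of_nonpos_of_nonneg (by norm_num) hα.le)
  · have := mul_nonneg (rpow_nonneg hβ.le α) (rpow_nonneg (mem_Ici.1 hs) α)
    linarith
  · gcongr

end StrainFactor

theorem ContinuousLinearMap.norm_sub_sq_le {E : Type*} [NormedAddCommGroup E]
    [NormedSpace ℝ E] (J : E →L[ℝ] E) (x y : E) :
    ‖J x - J y‖ ^ 2 ≤ ‖J‖ ^ 2 * ‖x - y‖ ^ 2 := by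
  rw [← map_sub, ← mul_pow]
  exact pow_le_pow_left₀ (norm_nonneg _) (J.le_opNorm _) 2

theorem strainLimiting_compliance_lipschitz_estimate_general
    {E : Type*} [NormedAddCommGroup E] [InnerProductSpace ℝ E]
    (J : E →L[ℝ] E) (hsym : ∀ x y : E, ⟪J x, y⟫ = ⟪x, J y⟫)
    (α β : ℝ) (hα : 0 < α) (hβ : 0 < β) (σ₁ σ₂ : E) :
    ⟪(1 + β ^ α * ‖J σ₁‖ ^ α) ^ (-1 / α) • J (J σ₁) -
        (1 + β ^ α * ‖J σ₂‖ ^ α) ^ (-1 / α) • J (J σ₂), σ₁ - σ₂⟫ ≤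
      ‖J‖ ^ 2 * ‖σ₁ - σ₂‖ ^ 2 := by
  let φ := strainFactor α β
  calc ⟪φ ‖J σ₁‖ • J (J σ₁) - φ ‖J σ₂‖ • J (J σ₂), σ₁ - σ₂⟫
      = ⟪φ ‖J σ₁‖ • J σ₁ - φ ‖J σ₂‖ • J σ₂, J σ₁ - J σ₂⟫ := by
        simpa only [map_sub, map_smul] using hsym (φ ‖J σ₁‖ • J σ₁ - φ ‖J σ₂‖ • J σ₂) (σ₁ - σ₂)
    _ ≤ ‖J σ₁ - J σ₂‖ ^ 2 :=
        real_inner_smul_sub_smul_sub_le_norm_sub_sq (antitoneOn_strainFactor hα hβ)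
          (fun _ ht => strainFactor_le_one hα hβ ht) _ _
    _ ≤ ‖J‖ ^ 2 * ‖σ₁ - σ₂‖ ^ 2 := J.norm_sub_sq_le σ₁ σ₂

/-- With `J` a self-adjoint positive-definite operator, the strain-limiting
response `F(σ) = (1 + β^α ‖Jσ‖^α)^(-1/α) • J(Jσ)` satisfies the Lipschitz-type
estimate `⟪F σ₁ - F σ₂, σ₁ - σ₂⟫ ≤ ‖J‖² ‖σ₁ - σ₂‖²`. -/
theorem strainLimiting_compliance_lipschitz_estimate
    {E : Type*} [NormedAddCommGroup E] [InnerProductSpace ℝ E]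
    [FiniteDimensional ℝ E]
    (J : E →L[ℝ] E) (hsym : ∀ x y : E, ⟪J x, y⟫ = ⟪x, J y⟫)
    (hpos : ∀ x : E, x ≠ 0 → 0 < ⟪J x, x⟫)
    (α β : ℝ) (hα : 0 < α) (hβ : 0 < β) (σ₁ σ₂ : E) :
    ⟪(1 + β ^ α * ‖J σ₁‖ ^ α) ^ (-1 / α) • J (J σ₁) -
        (1 + β ^ α * ‖J σ₂‖ ^ α) ^ (-1 / α) • J (J σ₂), σ₁ - σ₂⟫ ≤
      ‖J‖ ^ 2 * ‖σ₁ - σ₂‖ ^ 2 :=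
  strainLimiting_compliance_lipschitz_estimate_general J hsym α β hα hβ σ₁ σ₂
end
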